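/- arXiv:1406.0823 — 2 statements merged into one kernel-verified Lean document; each statement's English description precedes it below -/
import Mathlib

section
/- There exists a tiling of the 6×10 rectangle (height 6, base 10, placed with lower-left corner at the origin) by the union 𝒯_4 ∪ 𝒯_6 of the sets of ribbon L-shaped tetrominoes and ribbon L-shaped hexominoes that does not follow the rectangular pattern. -/
/-- A cell of the square lattice. -/
abbrev Cell : Type := ℤ × ℤ

/-- Translate a tile by a vector. -/
def translateTile (v : Cell) (t : Set Cell) : Set Cell := (fun p => p + v) '' t

/-- The ribbon L-shaped n-omino T1. -/
def T1 (n : ℕ) : Set Cell :=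
  {p : Cell | p.1 = 0 ∧ 0 ≤ p.2 ∧ p.2 ≤ (n : ℤ) - 2} ∪ {((1 : ℤ), (0 : ℤ))}

/-- The ribbon L-shaped n-omino T2. -/
def T2 (n : ℕ) : Set Cell :=
  {p : Cell | p.1 = 1 ∧ 0 ≤ p.2 ∧ p.2 ≤ (n : ℤ) - 2} ∪ {((0 : ℤ), (n : ℤ) - 2)}

/-- The ribbon L-shaped n-omino T3. -/
def T3 (n : ℕ) : Set Cell :=
  {p : Cell | p.2 = 0 ∧ 0 ≤ p.1 ∧ p.1 ≤ (n : ℤ) - 2} ∪ {((0 : ℤ), (1 : ℤ))}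

/-- The ribbon L-shaped n-omino T4. -/
def T4 (n : ℕ) : Set Cell :=
  {p : Cell | p.2 = 1 ∧ 0 ≤ p.1 ∧ p.1 ≤ (n : ℤ) - 2} ∪ {(((n : ℤ) - 2), (0 : ℤ))}

/-- The 2×2 square tile T5. -/
def T5 : Set Cell := {p : Cell | (p.1 = 0 ∨ p.1 = 1) ∧ (p.2 = 0 ∨ p.2 = 1)}

/-- The tile set 𝒯_n = {T1, T2, T3, T4}. -/
def Tset (n : ℕ) : Set (Set Cell) := {T1 n, T2 n, T3 n, T4 n}

/-- The tile set 𝒯_n⁺ = {T1, T2, T3, T4, T5}. -/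
def TsetPlus (n : ℕ) : Set (Set Cell) := Tset n ∪ {T5}

/-- A tiling of a region `R` by translates of tiles from `𝒯`:
a family of pairwise disjoint translates of tiles from `𝒯` whose union is `R`. -/
def IsTiling (𝒯 : Set (Set Cell)) (R : Set Cell) (tiling : Set (Set Cell)) : Prop :=
  (∀ P ∈ tiling, ∃ t ∈ 𝒯, ∃ v : Cell, P = translateTile v t) ∧
  (∀ P ∈ tiling, ∀ Q ∈ tiling, P ≠ Q → Disjoint P Q) ∧
  ⋃₀ tiling = R

/-- The a×b rectangle (height a, base b) with lower-left corner v. -/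
def rect (a b : ℕ) (v : Cell) : Set Cell :=
  {p : Cell | v.1 ≤ p.1 ∧ p.1 < v.1 + (b : ℤ) ∧ v.2 ≤ p.2 ∧ p.2 < v.2 + (a : ℤ)}

/-- A lattice point with both coordinates even. -/
def EvenPt (v : Cell) : Prop := Even v.1 ∧ Even v.2

/-- `P` is a translate of one of the four ribbon L-shaped n-ominoes. -/
def IsRibbonL (n : ℕ) (P : Set Cell) : Prop :=
  ∃ v : Cell,
    P = translateTile v (T1 n) ∨ P = translateTile v (T2 n) ∨
    P = translateTile v (T3 n) ∨ P = translateTile v (T4 n)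

/-- `P` is the union of exactly two ribbon L-shaped n-omino tiles of the tiling. -/
def TwoLRect (n : ℕ) (tiling : Set (Set Cell)) (P : Set Cell) : Prop :=
  ∃ A ∈ tiling, ∃ B ∈ tiling,
    A ≠ B ∧ IsRibbonL n A ∧ IsRibbonL n B ∧ P = A ∪ B

/-- The first quadrant. -/
def Q1 : Set Cell := {p : Cell | 0 ≤ p.1 ∧ 0 ≤ p.2}

/-- A tiling by 𝒯_m ∪ 𝒯_n follows the rectangular pattern on region `R`:
`R` is partitioned into 2×m, m×2, 2×n and n×2 rectangles with all corners at
even coordinates, each part being the union of exactly two ribbon L-shaped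
m-omino (resp. n-omino) tiles of the tiling. -/
def FollowsRectPatternUnion (m n : ℕ) (tiling : Set (Set Cell)) (R : Set Cell) : Prop :=
  ∃ parts : Set (Set Cell),
    (∀ P ∈ parts, ∀ Q ∈ parts, P ≠ Q → Disjoint P Q) ∧
    ⋃₀ parts = R ∧
    ∀ P ∈ parts, ∃ v : Cell, EvenPt v ∧
      (((P = rect 2 m v ∨ P = rect m 2 v) ∧ TwoLRect m tiling P) ∨
       ((P = rect 2 n v ∨ P = rect n 2 v) ∧ TwoLRect n tiling P))

lemma mem_translate' (v : Cell) (t : Set Cell) (p : Cell) :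
    p ∈ translateTile v t ↔ p - v ∈ t := by
  constructor
  · rintro ⟨a, ha, rfl⟩; simpa using ha
  · intro h; exact ⟨p - v, h, by simp⟩

lemma memL1 (n : ℕ) (a b x y : ℤ) :
    ((x, y) : Cell) ∈ translateTile (a, b) (T1 n) ↔
      ((x = a ∧ b ≤ y ∧ y ≤ b + (n : ℤ) - 2) ∨ (x = a + 1 ∧ y = b)) := by
  rw [mem_translate']
  simp only [T1, Set.mem_union, Set.mem_setOf_eq, Set.mem_singleton_iff,
    Prod.mk_sub_mk, Prod.mk.injEq]
  omega

lemma memL2 (n : ℕ) (a b x y : ℤ) :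
    ((x, y) : Cell) ∈ translateTile (a, b) (T2 n) ↔
      ((x = a + 1 ∧ b ≤ y ∧ y ≤ b + (n : ℤ) - 2) ∨ (x = a ∧ y = b + (n : ℤ) - 2)) := by
  rw [mem_translate']
  simp only [T2, Set.mem_union, Set.mem_setOf_eq, Set.mem_singleton_iff,
    Prod.mk_sub_mk, Prod.mk.injEq]
  omega

lemma memL3 (n : ℕ) (a b x y : ℤ) :
    ((x, y) : Cell) ∈ translateTile (a, b) (T3 n) ↔
      ((y = b ∧ a ≤ x ∧ x ≤ a + (n : ℤ) - 2) ∨ (x = a ∧ y = b + 1)) := by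
  rw [mem_translate']
  simp only [T3, Set.mem_union, Set.mem_setOf_eq, Set.mem_singleton_iff,
    Prod.mk_sub_mk, Prod.mk.injEq]
  omega

lemma memL4 (n : ℕ) (a b x y : ℤ) :
    ((x, y) : Cell) ∈ translateTile (a, b) (T4 n) ↔
      ((y = b + 1 ∧ a ≤ x ∧ x ≤ a + (n : ℤ) - 2) ∨ (x = a + (n : ℤ) - 2 ∧ y = b)) := by
  rw [mem_translate']
  simp only [T4, Set.mem_union, Set.mem_setOf_eq, Set.mem_singleton_iff,
    Prod.mk_sub_mk, Prod.mk.injEq]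
  omega

lemma mem_rect' (a b : ℕ) (u w x y : ℤ) :
    ((x, y) : Cell) ∈ rect a b (u, w) ↔
      u ≤ x ∧ x < u + (b : ℤ) ∧ w ≤ y ∧ y < w + (a : ℤ) := by
  simp [rect]

def myTiling : Set (Set Cell) :=
  {translateTile ((4 : ℤ), (0 : ℤ)) (T3 6), translateTile ((0 : ℤ), (0 : ℤ)) (T1 4), translateTile ((2 : ℤ), (0 : ℤ)) (T1 4), translateTile ((7 : ℤ), (0 : ℤ)) (T4 4), translateTile ((0 : ℤ), (1 : ℤ)) (T2 4), translateTile ((2 : ℤ), (1 : ℤ)) (T2 4), translateTile ((5 : ℤ), (1 : ℤ)) (T1 4), translateTile ((3 : ℤ), (2 : ℤ)) (T2 4), translateTile ((6 : ℤ), (2 : ℤ)) (T1 4), translateTile ((8 : ℤ), (2 : ℤ)) (T1 4), translateTile ((6 : ℤ), (3 : ℤ)) (T2 4), translateTile ((8 : ℤ), (3 : ℤ)) (T2 4), translateTile ((0 : ℤ), (4 : ℤ)) (T3 4), translateTile ((1 : ℤ), (4 : ℤ)) (T4 6)}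

lemma cover40 : ∀ X ∈ myTiling, (((4 : ℤ), (0 : ℤ)) : Cell) ∈ X →
    X = translateTile ((4 : ℤ), (0 : ℤ)) (T3 6) := by
  intro X hX h
  simp only [myTiling, Set.mem_insert_iff, Set.mem_singleton_iff] at hX
  rcases hX with rfl|rfl|rfl|rfl|rfl|rfl|rfl|rfl|rfl|rfl|rfl|rfl|rfl|rfl <;>
    first
      | rfl
      | (exfalso; simp only [memL1, memL2, memL3, memL4, Nat.cast_ofNat] at h; omega)

lemma cover51 : ∀ X ∈ myTiling, (((5 : ℤ), (1 : ℤ)) : Cell) ∈ X →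
    X = translateTile ((5 : ℤ), (1 : ℤ)) (T1 4) := by
  intro X hX h
  simp only [myTiling, Set.mem_insert_iff, Set.mem_singleton_iff] at hX
  rcases hX with rfl|rfl|rfl|rfl|rfl|rfl|rfl|rfl|rfl|rfl|rfl|rfl|rfl|rfl <;>
    first
      | rfl
      | (exfalso; simp only [memL1, memL2, memL3, memL4, Nat.cast_ofNat] at h; omega)

set_option maxHeartbeats 1000000 in
lemma union_eq : ⋃₀ myTiling = rect 6 10 ((0 : ℤ), (0 : ℤ)) := by
  apply Set.eq_of_subset_of_subset
  · rintro ⟨x, y⟩ h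
    simp only [myTiling, Set.sUnion_insert, Set.sUnion_singleton, Set.mem_union,
      memL1, memL2, memL3, memL4, Nat.cast_ofNat] at h
    rw [mem_rect']
    omega
  · rintro ⟨x, y⟩ h
    rw [mem_rect'] at h
    simp only [myTiling, Set.sUnion_insert, Set.sUnion_singleton, Set.mem_union,
      memL1, memL2, memL3, memL4, Nat.cast_ofNat]
    have hx : x = 0 ∨ x = 1 ∨ x = 2 ∨ x = 3 ∨ x = 4 ∨ x = 5 ∨ x = 6 ∨ x = 7 ∨ x = 8 ∨ x = 9 := by omega
    have hy : y = 0 ∨ y = 1 ∨ y = 2 ∨ y = 3 ∨ y = 4 ∨ y = 5 := by omega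
    rcases hx with rfl|rfl|rfl|rfl|rfl|rfl|rfl|rfl|rfl|rfl <;>
      rcases hy with rfl|rfl|rfl|rfl|rfl|rfl <;> norm_num



/-- There is a tiling of the 6×10 rectangle by 𝒯_4 ∪ 𝒯_6 that does not follow
the rectangular pattern. -/
theorem six_by_ten_tiling_not_rect_pattern :
    ∃ tiling : Set (Set Cell),
      IsTiling (Tset 4 ∪ Tset 6) (rect 6 10 ((0 : ℤ), (0 : ℤ))) tiling ∧
      ¬ FollowsRectPatternUnion 4 6 tiling (rect 6 10 ((0 : ℤ), (0 : ℤ))) := by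
  refine ⟨myTiling, ⟨?_, ?_, ?_⟩, ?_⟩
  · intro P hP
    simp only [myTiling, Set.mem_insert_iff, Set.mem_singleton_iff] at hP
    rcases hP with rfl|rfl|rfl|rfl|rfl|rfl|rfl|rfl|rfl|rfl|rfl|rfl|rfl|rfl
    · exact ⟨T3 6, by simp [Tset], _, rfl⟩
    · exact ⟨T1 4, by simp [Tset], _, rfl⟩
    · exact ⟨T1 4, by simp [Tset], _, rfl⟩
    · exact ⟨T4 4, by simp [Tset], _, rfl⟩
    · exact ⟨T2 4, by simp [Tset], _, rfl⟩
    · exact ⟨T2 4, by simp [Tset], _, rfl⟩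
    · exact ⟨T1 4, by simp [Tset], _, rfl⟩
    · exact ⟨T2 4, by simp [Tset], _, rfl⟩
    · exact ⟨T1 4, by simp [Tset], _, rfl⟩
    · exact ⟨T1 4, by simp [Tset], _, rfl⟩
    · exact ⟨T2 4, by simp [Tset], _, rfl⟩
    · exact ⟨T2 4, by simp [Tset], _, rfl⟩
    · exact ⟨T3 4, by simp [Tset], _, rfl⟩
    · exact ⟨T4 6, by simp [Tset], _, rfl⟩
  · intro P hP Q hQ hne
    simp only [myTiling, Set.mem_insert_iff, Set.mem_singleton_iff] at hP hQ
    rcases hP with rfl|rfl|rfl|rfl|rfl|rfl|rfl|rfl|rfl|rfl|rfl|rfl|rfl|rfl <;> rcases hQ with rfl|rfl|rfl|rfl|rfl|rfl|rfl|rfl|rfl|rfl|rfl|rfl|rfl|rfl <;>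
      first
        | exact absurd rfl hne
        | (rw [Set.disjoint_left]; rintro ⟨x, y⟩ hx hy;
           simp only [memL1, memL2, memL3, memL4, Nat.cast_ofNat] at hx hy; omega)
  · exact union_eq
  · rintro ⟨parts, hdisj, hcover, hshape⟩
    have h40 : (((4 : ℤ), (0 : ℤ)) : Cell) ∈ rect 6 10 ((0 : ℤ), (0 : ℤ)) := by
      rw [mem_rect']; omega
    rw [← hcover] at h40
    obtain ⟨P, hP, hmem⟩ := h40
    obtain ⟨⟨v1, v2⟩, hv, hcase⟩ := hshape P hP
    have hv1 : Even v1 := hv.1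
    have hv2 : Even v2 := hv.2
    obtain ⟨k1, hk1⟩ := hv1
    obtain ⟨k2, hk2⟩ := hv2
    have key : ∀ A ∈ myTiling, ∀ B ∈ myTiling, P = A ∪ B →
        (P = rect 2 4 (v1, v2) ∨ P = rect 4 2 (v1, v2) ∨
         P = rect 2 6 (v1, v2) ∨ P = rect 6 2 (v1, v2)) → False := by
      intro A hA B hB hPAB hr
      have hsub : translateTile ((4 : ℤ), (0 : ℤ)) (T3 6) ⊆ P := by
        rw [hPAB] at hmem ⊢
        rcases hmem with h | h
        · rw [cover40 A hA h]; exact Set.subset_union_left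
        · rw [cover40 B hB h]; exact Set.subset_union_right
      have h40P : (((4 : ℤ), (0 : ℤ)) : Cell) ∈ P := hsub (by rw [memL3]; omega)
      have h80 : (((8 : ℤ), (0 : ℤ)) : Cell) ∈ P := hsub (by rw [memL3]; omega)
      have h41 : (((4 : ℤ), (1 : ℤ)) : Cell) ∈ P := hsub (by rw [memL3]; omega)
      rcases hr with rfl | rfl | rfl | rfl <;>
          rw [mem_rect'] at h40P h80 h41 <;>
          try omega
      have h51 : (((5 : ℤ), (1 : ℤ)) : Cell) ∈ rect 2 6 (v1, v2) := by
        rw [mem_rect']; omega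
      rw [hPAB] at h51
      have hsub6 : translateTile ((5 : ℤ), (1 : ℤ)) (T1 4) ⊆ rect 2 6 (v1, v2) := by
        rcases h51 with h | h
        · rw [hPAB, ← cover51 A hA h]; exact Set.subset_union_left
        · rw [hPAB, ← cover51 B hB h]; exact Set.subset_union_right
      have h52 : (((5 : ℤ), (2 : ℤ)) : Cell) ∈ rect 2 6 (v1, v2) :=
        hsub6 (by rw [memL1]; omega)
      rw [mem_rect'] at h52
      omega
    rcases hcase with ⟨hr, A, hA, B, hB, -, -, -, hPAB⟩ | ⟨hr, A, hA, B, hB, -, -, -, hPAB⟩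
    · exact key A hA B hB hPAB (by tauto)
    · exact key A hA B hB hPAB (by tauto)
end

section
/- Let m, n ≥ 4 be even with m ≠ n. There exist even integers a, b ≥ 2 and a tiling of the a×b rectangle (height a, base b) by 𝒯_m ∪ 𝒯_n that does not follow the rectangular pattern. In particular, the rigidity of rectangle tilings by a single set 𝒯_n fails for the union of two such sets. -/
lemma mem_translateTile {v p : Cell} {t : Set Cell} :
    p ∈ translateTile v t ↔ (p.1 - v.1, p.2 - v.2) ∈ t := by
  constructor
  · rintro ⟨q, hq, rfl⟩; simpa using hq
  · intro h; exact ⟨(p.1 - v.1, p.2 - v.2), h, by ext <;> simp⟩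

@[simp] lemma memT1 {n : ℕ} {v p : Cell} :
    p ∈ translateTile v (T1 n) ↔
      (p.1 = v.1 ∧ v.2 ≤ p.2 ∧ p.2 ≤ v.2 + (n:ℤ) - 2) ∨ (p.1 = v.1 + 1 ∧ p.2 = v.2) := by
  rw [mem_translateTile]
  simp only [T1, Set.mem_union, Set.mem_setOf_eq, Set.mem_singleton_iff, Prod.mk.injEq]
  omega

@[simp] lemma memT2 {n : ℕ} {v p : Cell} :
    p ∈ translateTile v (T2 n) ↔
      (p.1 = v.1 + 1 ∧ v.2 ≤ p.2 ∧ p.2 ≤ v.2 + (n:ℤ) - 2) ∨ (p.1 = v.1 ∧ p.2 = v.2 + (n:ℤ) - 2) := by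
  rw [mem_translateTile]
  simp only [T2, Set.mem_union, Set.mem_setOf_eq, Set.mem_singleton_iff, Prod.mk.injEq]
  omega

@[simp] lemma memT3 {n : ℕ} {v p : Cell} :
    p ∈ translateTile v (T3 n) ↔
      (p.2 = v.2 ∧ v.1 ≤ p.1 ∧ p.1 ≤ v.1 + (n:ℤ) - 2) ∨ (p.1 = v.1 ∧ p.2 = v.2 + 1) := by
  rw [mem_translateTile]
  simp only [T3, Set.mem_union, Set.mem_setOf_eq, Set.mem_singleton_iff, Prod.mk.injEq]
  omega

@[simp] lemma memT4 {n : ℕ} {v p : Cell} :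
    p ∈ translateTile v (T4 n) ↔
      (p.2 = v.2 + 1 ∧ v.1 ≤ p.1 ∧ p.1 ≤ v.1 + (n:ℤ) - 2) ∨ (p.1 = v.1 + (n:ℤ) - 2 ∧ p.2 = v.2) := by
  rw [mem_translateTile]
  simp only [T4, Set.mem_union, Set.mem_setOf_eq, Set.mem_singleton_iff, Prod.mk.injEq]
  omega

@[simp] lemma mem_rect {a b : ℕ} {v p : Cell} :
    p ∈ rect a b v ↔ v.1 ≤ p.1 ∧ p.1 < v.1 + (b : ℤ) ∧ v.2 ≤ p.2 ∧ p.2 < v.2 + (a : ℤ) :=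
  Iff.rfl

/-- The explicit non-pattern tiling for even `4 ≤ m < n`. -/
def theTiling (m n : ℕ) : Set (Set Cell) :=
  {P | (∃ i : ℕ, 2*i+2 ≤ m ∧ P = translateTile ((2*i : ℤ), 0) (T1 m)) ∨
       (∃ i : ℕ, 2*i+2 ≤ m ∧ P = translateTile ((2*i : ℤ), 1) (T2 m)) ∨
       (∃ i : ℕ, 2*i+2 ≤ m ∧ P = translateTile ((n:ℤ)+2*i, 2) (T1 m)) ∨
       (∃ i : ℕ, 2*i+2 ≤ m ∧ P = translateTile ((n:ℤ)+2*i, 3) (T2 m)) ∨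
       (∃ j : ℕ, 2*j+2 ≤ n-m ∧ P = translateTile ((m:ℤ)+1+2*j, 1) (T1 m)) ∨
       (∃ j : ℕ, 2*j+2 ≤ n-m ∧ P = translateTile ((m:ℤ)-1+2*j, 2) (T2 m)) ∨
       P = translateTile ((m:ℤ), 0) (T3 n) ∨
       P = translateTile ((n:ℤ)+1, 0) (T4 m) ∨
       P = translateTile (0, (m:ℤ)) (T3 m) ∨
       P = translateTile (1, (m:ℤ)) (T4 n)}

lemma mem_theTiling {m n : ℕ} {P : Set Cell} :
    P ∈ theTiling m n ↔
      (∃ i : ℕ, 2*i+2 ≤ m ∧ P = translateTile ((2*i : ℤ), 0) (T1 m)) ∨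
      (∃ i : ℕ, 2*i+2 ≤ m ∧ P = translateTile ((2*i : ℤ), 1) (T2 m)) ∨
      (∃ i : ℕ, 2*i+2 ≤ m ∧ P = translateTile ((n:ℤ)+2*i, 2) (T1 m)) ∨
      (∃ i : ℕ, 2*i+2 ≤ m ∧ P = translateTile ((n:ℤ)+2*i, 3) (T2 m)) ∨
      (∃ j : ℕ, 2*j+2 ≤ n-m ∧ P = translateTile ((m:ℤ)+1+2*j, 1) (T1 m)) ∨
      (∃ j : ℕ, 2*j+2 ≤ n-m ∧ P = translateTile ((m:ℤ)-1+2*j, 2) (T2 m)) ∨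
      P = translateTile ((m:ℤ), 0) (T3 n) ∨
      P = translateTile ((n:ℤ)+1, 0) (T4 m) ∨
      P = translateTile (0, (m:ℤ)) (T3 m) ∨
      P = translateTile (1, (m:ℤ)) (T4 n) := Iff.rfl

lemma pairwise_theTiling {m n : ℕ} (hm4 : 4 ≤ m) (hlt : m < n) :
    ∀ P ∈ theTiling m n, ∀ Q ∈ theTiling m n, P = Q ∨ Disjoint P Q := by
  intro P hP Q hQ
  rw [mem_theTiling] at hP hQ
  rcases hP with ⟨i, hi, rfl⟩|⟨i, hi, rfl⟩|⟨i, hi, rfl⟩|⟨i, hi, rfl⟩|⟨i, hi, rfl⟩|⟨i, hi, rfl⟩|rfl|rfl|rfl|rfl <;>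
    rcases hQ with ⟨j, hj, rfl⟩|⟨j, hj, rfl⟩|⟨j, hj, rfl⟩|⟨j, hj, rfl⟩|⟨j, hj, rfl⟩|⟨j, hj, rfl⟩|rfl|rfl|rfl|rfl <;>
    first
      | exact Or.inl rfl
      | (rcases eq_or_ne i j with rfl | hij; · exact Or.inl rfl)
      | skip
  all_goals
    refine Or.inr (Set.disjoint_left.mpr fun p hp hq => ?_)
  all_goals
    simp only [memT1, memT2, memT3, memT4] at hp hq
  all_goals omega

section helpers
variable {m n : ℕ}

lemma memL1_s18 (i : ℕ) (hi : 2*i+2 ≤ m) : translateTile ((2*i : ℤ), 0) (T1 m) ∈ theTiling m n := by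
  rw [mem_theTiling]; exact Or.inl ⟨i, hi, rfl⟩
lemma memL2_s18 (i : ℕ) (hi : 2*i+2 ≤ m) : translateTile ((2*i : ℤ), 1) (T2 m) ∈ theTiling m n := by
  rw [mem_theTiling]; exact Or.inr (Or.inl ⟨i, hi, rfl⟩)
lemma memR1 (i : ℕ) (hi : 2*i+2 ≤ m) : translateTile ((n:ℤ)+2*i, 2) (T1 m) ∈ theTiling m n := by
  rw [mem_theTiling]; exact Or.inr (Or.inr (Or.inl ⟨i, hi, rfl⟩))
lemma memR2 (i : ℕ) (hi : 2*i+2 ≤ m) : translateTile ((n:ℤ)+2*i, 3) (T2 m) ∈ theTiling m n := by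
  rw [mem_theTiling]; exact Or.inr (Or.inr (Or.inr (Or.inl ⟨i, hi, rfl⟩)))
lemma memG (j : ℕ) (hj : 2*j+2 ≤ n-m) : translateTile ((m:ℤ)+1+2*j, 1) (T1 m) ∈ theTiling m n := by
  rw [mem_theTiling]; exact Or.inr (Or.inr (Or.inr (Or.inr (Or.inl ⟨j, hj, rfl⟩))))
lemma memH (j : ℕ) (hj : 2*j+2 ≤ n-m) : translateTile ((m:ℤ)-1+2*j, 2) (T2 m) ∈ theTiling m n := by
  rw [mem_theTiling]; exact Or.inr (Or.inr (Or.inr (Or.inr (Or.inr (Or.inl ⟨j, hj, rfl⟩)))))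
lemma memC : translateTile ((m:ℤ), 0) (T3 n) ∈ theTiling m n := by
  rw [mem_theTiling]; exact Or.inr (Or.inr (Or.inr (Or.inr (Or.inr (Or.inr (Or.inl rfl))))))
lemma memD : translateTile ((n:ℤ)+1, 0) (T4 m) ∈ theTiling m n := by
  rw [mem_theTiling]; exact Or.inr (Or.inr (Or.inr (Or.inr (Or.inr (Or.inr (Or.inr (Or.inl rfl)))))))
lemma memM : translateTile (0, (m:ℤ)) (T3 m) ∈ theTiling m n := by
  rw [mem_theTiling]
  exact Or.inr (Or.inr (Or.inr (Or.inr (Or.inr (Or.inr (Or.inr (Or.inr (Or.inl rfl))))))))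
lemma memN : translateTile (1, (m:ℤ)) (T4 n) ∈ theTiling m n := by
  rw [mem_theTiling]
  exact Or.inr (Or.inr (Or.inr (Or.inr (Or.inr (Or.inr (Or.inr (Or.inr (Or.inr rfl))))))))

end helpers

lemma cover_theTiling {m n : ℕ} (hm4 : 4 ≤ m) (hlt : m < n) (hm : Even m) (hn : Even n) :
    ⋃₀ theTiling m n = rect (m+2) (m+n) ((0:ℤ), (0:ℤ)) := by
  obtain ⟨k, hk⟩ := hm; obtain ⟨l, hl⟩ := hn
  ext ⟨x, y⟩
  simp only [Set.mem_sUnion]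
  constructor
  · rintro ⟨P, hP, hp⟩
    rw [mem_theTiling] at hP
    rcases hP with ⟨i,hi,rfl⟩|⟨i,hi,rfl⟩|⟨i,hi,rfl⟩|⟨i,hi,rfl⟩|⟨i,hi,rfl⟩|⟨i,hi,rfl⟩|rfl|rfl|rfl|rfl <;>
      simp only [memT1, memT2, memT3, memT4] at hp <;> rw [mem_rect] <;> omega
  · rw [mem_rect]
    intro hb
    obtain ⟨hx, hx2, hy, hy2⟩ : (0:ℤ) ≤ x ∧ x < (m:ℤ)+n ∧ (0:ℤ) ≤ y ∧ y < (m:ℤ)+2 := by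
      push_cast at hb; simpa using hb
    rcases lt_or_ge x (m:ℤ) with hxm | hxm
    · rcases lt_or_ge y (m:ℤ) with hym | hym
      · -- left blocks
        obtain ⟨i, hi⟩ : ∃ i : ℕ, (x = 2*i ∨ x = 2*i+1) := ⟨(x/2).toNat, by omega⟩
        rcases hi with hi | hi
        · rcases lt_or_ge y ((m:ℤ)-1) with hy1 | hy1
          · exact ⟨_, memL1_s18 i (by omega), by rw [memT1]; omega⟩
          · exact ⟨_, memL2_s18 i (by omega), by rw [memT2]; omega⟩
        · rcases eq_or_ne y 0 with rfl | hy0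
          · exact ⟨_, memL1_s18 i (by omega), by rw [memT1]; omega⟩
          · exact ⟨_, memL2_s18 i (by omega), by rw [memT2]; omega⟩
      · -- x < m, y ∈ {m, m+1}
        rcases eq_or_ne y (m:ℤ) with rfl | hy1
        · rcases lt_or_ge x ((m:ℤ)-1) with hx1 | hx1
          · exact ⟨_, memM, by rw [memT3]; omega⟩
          · exact ⟨_, memH 0 (by omega), by rw [memT2]; omega⟩
        · rcases eq_or_ne x 0 with rfl | hx0
          · exact ⟨_, memM, by rw [memT3]; omega⟩
          · exact ⟨_, memN, by rw [memT4]; omega⟩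
    · rcases lt_or_ge x (n:ℤ) with hxn | hxn
      · -- middle zone m ≤ x < n
        rcases eq_or_ne y 0 with rfl | hy0
        · exact ⟨_, memC, by rw [memT3]; omega⟩
        rcases eq_or_ne y 1 with rfl | hy1
        · rcases eq_or_ne x (m:ℤ) with rfl | hxm'
          · exact ⟨_, memC, by rw [memT3]; omega⟩
          · obtain ⟨j, hj⟩ : ∃ j : ℕ, (x - m = 2*j+1 ∨ x - m = 2*j+2) := ⟨((x-m-1)/2).toNat, by omega⟩
            rcases hj with hj | hj
            · exact ⟨_, memG j (by omega), by rw [memT1]; omega⟩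
            · exact ⟨_, memG j (by omega), by rw [memT1]; omega⟩
        rcases eq_or_ne y ((m:ℤ)+1) with rfl | hytop
        · exact ⟨_, memN, by rw [memT4]; omega⟩
        rcases eq_or_ne y (m:ℤ) with rfl | hym'
        · rcases eq_or_ne x ((n:ℤ)-1) with rfl | hxn1
          · exact ⟨_, memN, by rw [memT4]; omega⟩
          · obtain ⟨j, hj⟩ : ∃ j : ℕ, (x - m = 2*j ∨ x - m = 2*j+1) := ⟨((x-m)/2).toNat, by omega⟩
            rcases hj with hj | hj
            · exact ⟨_, memH j (by omega), by rw [memT2]; omega⟩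
            · exact ⟨_, memH (j+1) (by omega), by rw [memT2]; omega⟩
        · obtain ⟨j, hj⟩ : ∃ j : ℕ, (x - m = 2*j ∨ x - m = 2*j+1) := ⟨((x-m)/2).toNat, by omega⟩
          rcases hj with hj | hj
          · exact ⟨_, memH j (by omega), by rw [memT2]; omega⟩
          · exact ⟨_, memG j (by omega), by rw [memT1]; omega⟩
      · -- right zone x ≥ n
        rcases eq_or_ne y 0 with rfl | hy0
        · rcases eq_or_ne x ((m:ℤ)+n-1) with rfl | hxl
          · exact ⟨_, memD, by rw [memT4]; omega⟩
          · exact ⟨_, memC, by rw [memT3]; omega⟩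
        rcases eq_or_ne y 1 with rfl | hy1
        · rcases eq_or_ne x (n:ℤ) with rfl | hxn0
          · exact ⟨_, memG ((n-m-2)/2) (by omega), by rw [memT1]; omega⟩
          · exact ⟨_, memD, by rw [memT4]; omega⟩
        · obtain ⟨i, hi⟩ : ∃ i : ℕ, (x - n = 2*i ∨ x - n = 2*i+1) := ⟨((x-n)/2).toNat, by omega⟩
          rcases hi with hi | hi
          · rcases lt_or_ge y ((m:ℤ)+1) with hyt | hyt
            · exact ⟨_, memR1 i (by omega), by rw [memT1]; omega⟩
            · exact ⟨_, memR2 i (by omega), by rw [memT2]; omega⟩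
          · rcases eq_or_ne y 2 with rfl | hy2'
            · exact ⟨_, memR1 i (by omega), by rw [memT1]; omega⟩
            · exact ⟨_, memR2 i (by omega), by rw [memT2]; omega⟩

/-- No set can be a ribbon L m-omino and a ribbon L n-omino at once, for m < n. -/
lemma not_ribbon_both {m n : ℕ} (hm4 : 4 ≤ m) (hlt : m < n) {X : Set Cell}
    (h1 : IsRibbonL m X) (h2 : IsRibbonL n X) : False := by
  obtain ⟨v, hv⟩ := h1
  obtain ⟨w, hw⟩ := h2
  have key : ∀ p q : Cell, p ∈ X → q ∈ X →
      ¬((p.1 = q.1 ∧ q.2 = p.2 + (n:ℤ) - 2) ∨ (p.2 = q.2 ∧ q.1 = p.1 + (n:ℤ) - 2)) := by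
    intro p q hp hq hcon
    rcases hv with h|h|h|h <;> subst h <;>
      simp only [memT1, memT2, memT3, memT4] at hp hq <;> omega
  rcases hw with h|h|h|h <;> subst h
  · exact key (w.1, w.2) (w.1, w.2 + (n:ℤ) - 2)
      (by rw [memT1]; omega) (by rw [memT1]; omega) (by omega)
  · exact key (w.1 + 1, w.2) (w.1 + 1, w.2 + (n:ℤ) - 2)
      (by rw [memT2]; omega) (by rw [memT2]; omega) (by omega)
  · exact key (w.1, w.2) (w.1 + (n:ℤ) - 2, w.2)
      (by rw [memT3]; omega) (by rw [memT3]; omega) (by omega)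
  · exact key (w.1, w.2 + 1) (w.1 + (n:ℤ) - 2, w.2 + 1)
      (by rw [memT4]; omega) (by rw [memT4]; omega) (by omega)

/-- Every tile of `theTiling` is a ribbon L m-omino or a ribbon L n-omino,
and the only n-ominoes are `C` and `N`. -/
lemma tiles_ribbon {m n : ℕ} {P : Set Cell} (hP : P ∈ theTiling m n) :
    IsRibbonL m P ∨ (P = translateTile ((m:ℤ), 0) (T3 n) ∨ P = translateTile (1, (m:ℤ)) (T4 n)) := by
  rw [mem_theTiling] at hP
  rcases hP with ⟨i,hi,rfl⟩|⟨i,hi,rfl⟩|⟨i,hi,rfl⟩|⟨i,hi,rfl⟩|⟨i,hi,rfl⟩|⟨i,hi,rfl⟩|rfl|rfl|rfl|rfl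
  · exact Or.inl ⟨_, Or.inl rfl⟩
  · exact Or.inl ⟨_, Or.inr (Or.inl rfl)⟩
  · exact Or.inl ⟨_, Or.inl rfl⟩
  · exact Or.inl ⟨_, Or.inr (Or.inl rfl)⟩
  · exact Or.inl ⟨_, Or.inl rfl⟩
  · exact Or.inl ⟨_, Or.inr (Or.inl rfl)⟩
  · exact Or.inr (Or.inl rfl)
  · exact Or.inl ⟨_, Or.inr (Or.inr (Or.inr rfl))⟩
  · exact Or.inl ⟨_, Or.inr (Or.inr (Or.inl rfl))⟩
  · exact Or.inr (Or.inr rfl)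

/-- The only tile of the tiling containing the cell (m, 0) is `C`. -/
lemma ownerC {m n : ℕ} (hm4 : 4 ≤ m) (hlt : m < n) {A : Set Cell} (hA : A ∈ theTiling m n)
    (hc : ((m:ℤ), (0:ℤ)) ∈ A) : A = translateTile ((m:ℤ), 0) (T3 n) := by
  rw [mem_theTiling] at hA
  rcases hA with ⟨i,hi,rfl⟩|⟨i,hi,rfl⟩|⟨i,hi,rfl⟩|⟨i,hi,rfl⟩|⟨i,hi,rfl⟩|⟨i,hi,rfl⟩|rfl|rfl|rfl|rfl <;>
    simp only [memT1, memT2, memT3, memT4] at hc <;> first | rfl | omega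

lemma isTiling_theTiling {m n : ℕ} (hm4 : 4 ≤ m) (hlt : m < n) (hm : Even m) (hn : Even n) :
    IsTiling (Tset m ∪ Tset n) (rect (m+2) (m+n) ((0:ℤ), (0:ℤ))) (theTiling m n) := by
  refine ⟨?_, ?_, cover_theTiling hm4 hlt hm hn⟩
  · intro P hP
    rw [mem_theTiling] at hP
    rcases hP with ⟨i,hi,rfl⟩|⟨i,hi,rfl⟩|⟨i,hi,rfl⟩|⟨i,hi,rfl⟩|⟨i,hi,rfl⟩|⟨i,hi,rfl⟩|rfl|rfl|rfl|rfl
    · exact ⟨T1 m, Or.inl (by simp [Tset]), _, rfl⟩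
    · exact ⟨T2 m, Or.inl (by simp [Tset]), _, rfl⟩
    · exact ⟨T1 m, Or.inl (by simp [Tset]), _, rfl⟩
    · exact ⟨T2 m, Or.inl (by simp [Tset]), _, rfl⟩
    · exact ⟨T1 m, Or.inl (by simp [Tset]), _, rfl⟩
    · exact ⟨T2 m, Or.inl (by simp [Tset]), _, rfl⟩
    · exact ⟨T3 n, Or.inr (by simp [Tset]), _, rfl⟩
    · exact ⟨T4 m, Or.inl (by simp [Tset]), _, rfl⟩
    · exact ⟨T3 m, Or.inl (by simp [Tset]), _, rfl⟩
    · exact ⟨T4 n, Or.inr (by simp [Tset]), _, rfl⟩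
  · intro P hP Q hQ hne
    rcases pairwise_theTiling hm4 hlt P hP Q hQ with h | h
    · exact absurd h hne
    · exact h

lemma not_pattern {m n : ℕ} (hm4 : 4 ≤ m) (hlt : m < n) :
    ¬ FollowsRectPatternUnion m n (theTiling m n) (rect (m+2) (m+n) ((0:ℤ), (0:ℤ))) := by
  intro hF
  obtain ⟨parts, hdis, hcov, hshape⟩ := hF
  set Ct : Set Cell := translateTile ((m:ℤ), 0) (T3 n) with hCt
  set Nt : Set Cell := translateTile (1, (m:ℤ)) (T4 n) with hNt
  have hcR : ((m:ℤ), (0:ℤ)) ∈ ⋃₀ parts := by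
    rw [hcov, mem_rect]; omega
  obtain ⟨P, hP, hcP⟩ := hcR
  obtain ⟨v, _hv, hsh⟩ := hshape P hP
  have hCribbon : IsRibbonL n Ct := ⟨((m:ℤ), 0), Or.inr (Or.inr (Or.inl rfl))⟩
  rcases hsh with ⟨_, hTL⟩ | ⟨hrect, hTL⟩
  · -- the part containing (m,0) cannot consist of two m-ominoes
    obtain ⟨A, hA, B, hB, hne, hrA, hrB, rfl⟩ := hTL
    rcases hcP with hc | hc
    · have hAC : A = Ct := by rw [hCt]; exact ownerC hm4 hlt hA hc
      exact not_ribbon_both hm4 hlt (hAC ▸ hrA) hCribbon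
    · have hBC : B = Ct := by rw [hCt]; exact ownerC hm4 hlt hB hc
      exact not_ribbon_both hm4 hlt (hBC ▸ hrB) hCribbon
  · -- two n-ominoes: they must be C and N, but C ∪ N is not a 2×n or n×2 rectangle
    obtain ⟨A, hA, B, hB, hne, hrA, hrB, rfl⟩ := hTL
    have honly : ∀ X ∈ theTiling m n, IsRibbonL n X → X = Ct ∨ X = Nt := by
      intro X hX hrX
      rcases tiles_ribbon hX with hmX | hX2
      · exact absurd (not_ribbon_both hm4 hlt hmX hrX) (by simp)
      · exact hX2
    have hfinal : ∀ U : Set Cell, Ct ⊆ U → Nt ⊆ U →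
        (U = rect 2 n v ∨ U = rect n 2 v) → False := by
      intro U hCU hNU hU
      have h1 : ((m:ℤ), (0:ℤ)) ∈ U := hCU (by rw [hCt, memT3]; omega)
      have h2 : ((m:ℤ) + n - 2, (0:ℤ)) ∈ U := hCU (by rw [hCt, memT3]; omega)
      have h3 : ((1:ℤ), (m:ℤ) + 1) ∈ U := hNU (by rw [hNt, memT4]; omega)
      rcases hU with rfl | rfl
      · rw [mem_rect] at h1 h3; omega
      · rw [mem_rect] at h1 h2; omega
    rcases hcP with hc | hc
    · have hAC : A = Ct := ownerC hm4 hlt hA hc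
      rcases honly B hB hrB with hBC | hBN
      · exact hne (hAC.trans hBC.symm)
      · exact hfinal (A ∪ B) (hAC ▸ Set.subset_union_left)
          (hBN ▸ Set.subset_union_right) hrect
    · have hBC : B = Ct := ownerC hm4 hlt hB hc
      rcases honly A hA hrA with hAC | hAN
      · exact hne (hAC.trans hBC.symm)
      · exact hfinal (A ∪ B) (hBC ▸ Set.subset_union_right)
          (hAN ▸ Set.subset_union_left) hrect

lemma FRPU_symm {m n : ℕ} {t : Set (Set Cell)} {R : Set Cell}
    (h : FollowsRectPatternUnion m n t R) : FollowsRectPatternUnion n m t R := by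
  obtain ⟨parts, h1, h2, h3⟩ := h
  refine ⟨parts, h1, h2, fun P hP => ?_⟩
  obtain ⟨v, hv, h⟩ := h3 P hP
  exact ⟨v, hv, h.symm⟩

/-- For distinct even m, n ≥ 4, some rectangle with both sides even admits a
tiling by 𝒯_m ∪ 𝒯_n that does not follow the rectangular pattern. -/
theorem union_of_two_Tsets_not_rigid
    (m n : ℕ) (hm4 : 4 ≤ m) (hm : Even m) (hn4 : 4 ≤ n) (hn : Even n)
    (hmn : m ≠ n) :
    ∃ a b : ℕ, Even a ∧ Even b ∧ 2 ≤ a ∧ 2 ≤ b ∧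
      ∃ tiling : Set (Set Cell),
        IsTiling (Tset m ∪ Tset n) (rect a b ((0 : ℤ), (0 : ℤ))) tiling ∧
        ¬ FollowsRectPatternUnion m n tiling (rect a b ((0 : ℤ), (0 : ℤ))) := by
  rcases lt_or_gt_of_ne hmn with hlt | hlt
  · obtain ⟨a, ha⟩ := id hm
    obtain ⟨b, hb⟩ := id hn
    exact ⟨m+2, m+n, ⟨a+1, by omega⟩, ⟨a+b, by omega⟩, by omega, by omega, theTiling m n,
      isTiling_theTiling hm4 hlt hm hn, not_pattern hm4 hlt⟩
  · obtain ⟨a, ha⟩ := id hm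
    obtain ⟨b, hb⟩ := id hn
    refine ⟨n+2, n+m, ⟨b+1, by omega⟩, ⟨a+b, by omega⟩, by omega, by omega, theTiling n m, ?_, ?_⟩
    · rw [Set.union_comm]
      exact isTiling_theTiling hn4 hlt hn hm
    · exact fun hF => not_pattern hn4 hlt (FRPU_symm hF)
end
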